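/- Suppose P is symmetric with π₁ = P(ℝ∖{0}) > 0. Then for every y ∈ ℝ, (1 − π₁) φ(y) < min( ∫_{(−∞,0]} φ(y − x) dP(x), ∫_{[0,∞)} φ(y − x) dP(x) ) < (1 − ρ₁) φ(y). Equivalently, dividing by m(y) > 0: the local null-signal rate lnsr(y) = (1 − π₁)φ(y)/m(y) is strictly smaller than the local false sign rate lfsr(y) = min(P(X ≤ 0 | Y = y), P(X ≥ 0 | Y = y)), which in turn is strictly smaller than the complementary local activity rate clar(y) = (1 − ρ₁)φ(y)/m(y). -/

import Mathlib

open MeasureTheory Real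

/-- The standard normal density. -/
noncomputable def phi (t : ℝ) : ℝ := (Real.sqrt (2 * Real.pi))⁻¹ * Real.exp (-(t ^ 2) / 2)

/-- The marginal density of `Y` in the signal-plus-noise model. -/
noncomputable def marginal (P : Measure ℝ) (y : ℝ) : ℝ := ∫ x, phi (y - x) ∂P

/-- The sparsity rate `ρ₁ = ∫ (1 - e^{-x²/2}) dP(x)`. -/
noncomputable def sparsityRate (P : Measure ℝ) : ℝ := ∫ x, (1 - Real.exp (-(x ^ 2) / 2)) ∂P

lemma phi_pos (t : ℝ) : 0 < phi t := by
  unfold phi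
  have h : 0 < Real.sqrt (2 * Real.pi) := Real.sqrt_pos.mpr (by positivity)
  positivity

lemma phi_cont : Continuous phi := by
  unfold phi; fun_prop

lemma phi_bdd (t : ℝ) : |phi t| ≤ (Real.sqrt (2 * Real.pi))⁻¹ := by
  rw [abs_of_pos (phi_pos t)]
  unfold phi
  have h : 0 < Real.sqrt (2 * Real.pi) := Real.sqrt_pos.mpr (by positivity)
  have : Real.exp (-(t ^ 2) / 2) ≤ 1 := Real.exp_le_one_iff.mpr (by nlinarith [sq_nonneg t])
  nlinarith [inv_pos.mpr h]

lemma integrable_bdd {μ : Measure ℝ} [IsFiniteMeasure μ] {f : ℝ → ℝ} (hc : Continuous f)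
    (C : ℝ) (hC : ∀ x, |f x| ≤ C) : Integrable f μ :=
  (integrable_const C).mono' hc.aestronglyMeasurable (Filter.Eventually.of_forall hC)

lemma integrable_phi {μ : Measure ℝ} [IsFiniteMeasure μ] (y : ℝ) :
    Integrable (fun x => phi (y - x)) μ :=
  integrable_bdd (phi_cont.comp (by fun_prop)) _ (fun x => phi_bdd _)

lemma integrable_exp' {μ : Measure ℝ} [IsFiniteMeasure μ] :
    Integrable (fun x : ℝ => Real.exp (-(x ^ 2) / 2)) μ := by
  refine integrable_bdd (by fun_prop) 1 (fun x => ?_)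
  rw [abs_of_pos (Real.exp_pos _)]
  exact Real.exp_le_one_iff.mpr (by nlinarith [sq_nonneg x])

lemma setIntegral_pos {P : Measure ℝ} [IsProbabilityMeasure P] {f : ℝ → ℝ}
    (hf : Integrable f P) (hpos : ∀ x, 0 < f x) {s : Set ℝ} (hs : MeasurableSet s)
    (hP : P s ≠ 0) : 0 < ∫ x in s, f x ∂P := by
  rw [setIntegral_pos_iff_support_of_nonneg_ae
      (Filter.Eventually.of_forall (fun x => (hpos x).le)) hf.integrableOn]
  have : Function.support f = Set.univ := by
    ext x; simp [Function.mem_support, (hpos x).ne']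
  rw [this, Set.univ_inter]
  exact hP.bot_lt

/-- pointwise bound when `x * y ≤ 0`. -/
lemma phi_le (x y : ℝ) (hxy : x * y ≤ 0) :
    phi (y - x) ≤ phi y * Real.exp (-(x ^ 2) / 2) := by
  unfold phi
  rw [mul_assoc, ← Real.exp_add]
  have h : 0 < Real.sqrt (2 * Real.pi) := Real.sqrt_pos.mpr (by positivity)
  have hexp : Real.exp (-((y - x) ^ 2) / 2) ≤ Real.exp (-(y ^ 2) / 2 + -(x ^ 2) / 2) :=
    Real.exp_le_exp.mpr (by nlinarith)
  nlinarith [inv_pos.mpr h]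

/-- for symmetric `P` with non-null proportion `π₁ > 0`, the local null-signal
rate is strictly smaller than the local false sign rate, which in turn is strictly smaller
than the complementary local activity rate: for every `y`,
`(1 - π₁) φ(y) < min(∫_{(-∞,0]} φ(y-x) dP, ∫_{[0,∞)} φ(y-x) dP) < (1 - ρ₁) φ(y)`. -/
theorem stmt9 (P : Measure ℝ) [IsProbabilityMeasure P]
    (hsymm : Measure.map (fun x : ℝ => -x) P = P)
    (π₁ : ℝ) (hπ : π₁ = (P ({0}ᶜ : Set ℝ)).toReal) (hπpos : 0 < π₁) :
    ∀ y : ℝ,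
      (1 - π₁) * phi y <
        min (∫ x in Set.Iic (0 : ℝ), phi (y - x) ∂P) (∫ x in Set.Ici (0 : ℝ), phi (y - x) ∂P) ∧
      min (∫ x in Set.Iic (0 : ℝ), phi (y - x) ∂P) (∫ x in Set.Ici (0 : ℝ), phi (y - x) ∂P) <
        (1 - sparsityRate P) * phi y := by
  intro y
  -- symmetry: P (Iio 0) = P (Ioi 0)
  have hmap : P (Set.Ioi 0) = P (Set.Iio 0) := by
    conv_lhs => rw [← hsymm]
    rw [Measure.map_apply measurable_neg measurableSet_Ioi]
    congr 1
    ext x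
    simp
  -- the two open halves have positive measure
  have hcompl : P ({0}ᶜ : Set ℝ) = P (Set.Iio 0) + P (Set.Ioi 0) := by
    have := measure_union (μ := P)
      (Set.disjoint_left.mpr (fun (x:ℝ) (hx1 : x ∈ Set.Iio 0) hx2 => absurd hx1 (not_lt.mpr hx2.le)))
      measurableSet_Ioi
    rwa [Set.Iio_union_Ioi] at this
  have hIio : P (Set.Iio 0) ≠ 0 := by
    intro h0
    rw [hcompl, h0, hmap, h0, add_zero] at hπ
    simp at hπ
    exact absurd hπ (by linarith)
  have hIoi : P (Set.Ioi 0) ≠ 0 := by rw [hmap]; exact hIio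
  -- singleton value
  have hsing : ∀ y' : ℝ, (∫ x in ({0} : Set ℝ), phi (y' - x) ∂P) = (1 - π₁) * phi y' := by
    intro y'
    rw [Measure.restrict_singleton, integral_smul_measure, integral_dirac]
    have h1 : P ({0} : Set ℝ) = 1 - P ({0}ᶜ : Set ℝ) := by
      rw [measure_compl (MeasurableSet.singleton 0) (measure_ne_top P _), measure_univ,
        ENNReal.sub_sub_cancel ENNReal.one_ne_top (prob_le_one)]
    rw [h1, hπ]
    have hle : P ({0}ᶜ : Set ℝ) ≤ 1 := prob_le_one
    rw [ENNReal.toReal_sub_of_le hle ENNReal.one_ne_top]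
    simp [smul_eq_mul]
  -- split set integrals
  have hsplitIic : (∫ x in Set.Iic (0 : ℝ), phi (y - x) ∂P)
      = (∫ x in Set.Iio (0 : ℝ), phi (y - x) ∂P) + (1 - π₁) * phi y := by
    rw [← hsing y, ← setIntegral_union (by simp) (MeasurableSet.singleton 0)
      (integrable_phi y).integrableOn (integrable_phi y).integrableOn, Set.Iio_union_right]
  have hsplitIci : (∫ x in Set.Ici (0 : ℝ), phi (y - x) ∂P)
      = (∫ x in Set.Ioi (0 : ℝ), phi (y - x) ∂P) + (1 - π₁) * phi y := by
    rw [← hsing y, ← setIntegral_union (by simp) (MeasurableSet.singleton 0)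
      (integrable_phi y).integrableOn (integrable_phi y).integrableOn, Set.Ioi_union_left]
  constructor
  · refine lt_min ?_ ?_
    · rw [hsplitIic]
      have := setIntegral_pos (P := P) (integrable_phi y) (fun x => phi_pos _) measurableSet_Iio hIio
      linarith
    · rw [hsplitIci]
      have := setIntegral_pos (P := P) (integrable_phi y) (fun x => phi_pos _) measurableSet_Ioi hIoi
      linarith
  · -- second inequality
    have hrho : (1 - sparsityRate P) * phi y = ∫ x, phi y * Real.exp (-(x ^ 2) / 2) ∂P := by
      rw [integral_const_mul]
      unfold sparsityRate
      rw [integral_sub (integrable_const 1) integrable_exp', integral_const]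
      simp only [measure_univ, probReal_univ, ENNReal.toReal_one, smul_eq_mul, one_mul]
      ring
    have hexppos : ∀ (s : Set ℝ), MeasurableSet s → P s ≠ 0 →
        0 < ∫ x in s, phi y * Real.exp (-(x ^ 2) / 2) ∂P := by
      intro s hs h0
      exact setIntegral_pos (integrable_exp'.const_mul _)
        (fun x => mul_pos (phi_pos y) (Real.exp_pos _)) hs h0
    have hint : Integrable (fun x : ℝ => phi y * Real.exp (-(x ^ 2) / 2)) P :=
      integrable_exp'.const_mul _
    rcases le_total y 0 with hy | hy
    · -- use the Ici side: x ≥ 0 ⇒ x*y ≤ 0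
      refine min_lt_iff.mpr (Or.inr ?_)
      have h1 : (∫ x in Set.Ici (0 : ℝ), phi (y - x) ∂P)
          ≤ ∫ x in Set.Ici (0 : ℝ), phi y * Real.exp (-(x ^ 2) / 2) ∂P := by
        refine setIntegral_mono_on (integrable_phi y).integrableOn hint.integrableOn
          measurableSet_Ici (fun x hx => phi_le x y ?_)
        exact mul_nonpos_iff.mpr (Or.inl ⟨Set.mem_Ici.mp hx, hy⟩)
      have h2 : (∫ x in Set.Ici (0 : ℝ), phi y * Real.exp (-(x ^ 2) / 2) ∂P)
          < (1 - sparsityRate P) * phi y := by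
        rw [hrho, ← integral_add_compl measurableSet_Ici hint, Set.compl_Ici]
        have := hexppos (Set.Iio 0) measurableSet_Iio hIio
        linarith
      linarith
    · -- use the Iic side: x ≤ 0 ⇒ x*y ≤ 0
      refine min_lt_iff.mpr (Or.inl ?_)
      have h1 : (∫ x in Set.Iic (0 : ℝ), phi (y - x) ∂P)
          ≤ ∫ x in Set.Iic (0 : ℝ), phi y * Real.exp (-(x ^ 2) / 2) ∂P := by
        refine setIntegral_mono_on (integrable_phi y).integrableOn hint.integrableOn
          measurableSet_Iic (fun x hx => phi_le x y ?_)
        exact mul_nonpos_iff.mpr (Or.inr ⟨Set.mem_Iic.mp hx, hy⟩)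
      have h2 : (∫ x in Set.Iic (0 : ℝ), phi y * Real.exp (-(x ^ 2) / 2) ∂P)
          < (1 - sparsityRate P) * phi y := by
        rw [hrho, ← integral_add_compl measurableSet_Iic hint, Set.compl_Iic]
        have := hexppos (Set.Ioi 0) measurableSet_Ioi hIoi
        linarith
      linarith
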